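/- arXiv:1910.05454 — 2 statements merged into one kernel-verified Lean document; each statement's English description precedes it below -/
import Mathlib

section
/- For every matrix X in SL₂(ℤₚ), the centralizer of X in SL₂(ℤₚ), namely the set C(X) = {Y ∈ SL₂(ℤₚ) : Y·X·Y⁻¹ = X}, is an infinite set. -/
/-!
If `X` is central, every transvection commutes with it. Otherwise the matrices `a • 1 + c • X`
commute with `X`, are pairwise distinct, and have determinant `a ^ 2 + t a c + c ^ 2` with
`t = tr X`. The conic `a ^ 2 + t a c + c ^ 2 = 1` has the point `(1, 0)`; projecting from it,
every slope `s` in the maximal ideal of `ℤ_[p]` gives a further point, because `1 + s (s - t)`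
is then a unit, and distinct slopes give distinct points.
-/

open IsLocalRing

namespace Matrix

variable {n R : Type*} [Fintype n] [DecidableEq n] [CommRing R]

theorem det_fin_two_smul_one_add_smul (a c : R) (A : Matrix (Fin 2) (Fin 2) R) :
    det (a • 1 + c • A) = a ^ 2 + a * c * trace A + c ^ 2 * det A := by
  simp only [det_fin_two, trace_fin_two, Matrix.add_apply, Matrix.smul_apply, smul_eq_mul,
    one_apply_eq, one_apply_ne zero_ne_one, one_apply_ne one_ne_zero]
  ring

theorem commute_smul_one_add_smul_self (a c : R) (A : Matrix n n R) :
    Commute (a • 1 + c • A) A :=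
  ((Commute.one_left A).smul_left a).add_left ((Commute.refl A).smul_left c)

theorem smul_one_add_smul_injective [Nonempty n] [IsDomain R] {A : Matrix n n R}
    (hA : ∃ B, ¬Commute B A) :
    Function.Injective fun ac : R × R ↦ ac.1 • (1 : Matrix n n R) + ac.2 • A := by
  rintro ⟨a, c⟩ ⟨a', c'⟩ h
  have hsub : (c - c') • A = (a' - a) • (1 : Matrix n n R) := by
    simp only at h
    rw [sub_smul, sub_smul, sub_eq_sub_iff_add_eq_add, add_comm, h, add_comm]
  have hc : c = c' := by
    by_contra hne
    obtain ⟨B, hB⟩ := hA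
    have hcomm : Commute B ((c - c') • A) := hsub ▸ (Commute.one_right B).smul_right _
    refine hB (smul_right_injective _ (sub_ne_zero.mpr hne) ?_)
    simpa only [smul_mul_assoc, mul_smul_comm] using hcomm.eq
  subst hc
  have ha : a = a' := smul_left_injective R (one_ne_zero (α := Matrix n n R)) (add_right_cancel h)
  rw [ha]

namespace SpecialLinearGroup

theorem transvection_injective {i j : n} (hij : i ≠ j) :
    Function.Injective (transvection hij : R → SpecialLinearGroup n R) := by
  intro b b' h
  simpa [transvection_coe, hij] using
    congr_arg (fun M : SpecialLinearGroup n R ↦ (M : Matrix n n R) i j) h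

end SpecialLinearGroup

end Matrix

section Conic

variable {R : Type*} [CommRing R]

/-- The second point where the line `a = 1 - s * c` through `(1, 0)` meets the conic
`a ^ 2 + t * a * c + c ^ 2 = 1`; meaningful only when `1 + s * (s - t)` is a unit
(otherwise `Ring.inverse` returns `0`). -/
noncomputable def conicPoint (t s : R) : R × R :=
  let c := (2 * s - t) * Ring.inverse (1 + s * (s - t))
  (1 - s * c, c)

variable {t s : R}

theorem conicPoint_snd_mul (hs : IsUnit (1 + s * (s - t))) :
    (conicPoint t s).2 * (1 + s * (s - t)) = 2 * s - t := by
  rw [conicPoint, mul_assoc, Ring.inverse_mul_cancel _ hs, mul_one]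

theorem conicPoint_mem (hs : IsUnit (1 + s * (s - t))) :
    (conicPoint t s).1 ^ 2 + (conicPoint t s).1 * (conicPoint t s).2 * t
      + (conicPoint t s).2 ^ 2 = 1 := by
  have h := conicPoint_snd_mul hs
  simp only [conicPoint] at h ⊢
  linear_combination (2 * s - t) * Ring.inverse (1 + s * (s - t)) * h

theorem conicPoint_injOn [IsDomain R] (h2 : (2 : R) ≠ 0) :
    Set.InjOn (conicPoint t) {s | IsUnit (1 + s * (s - t))} := by
  intro s hs s' hs' h
  obtain ⟨ha, hc⟩ := Prod.ext_iff.mp h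
  by_cases hc0 : (conicPoint t s).2 = 0
  · have e := conicPoint_snd_mul hs
    have e' := conicPoint_snd_mul hs'
    rw [hc0, zero_mul] at e
    rw [← hc, hc0, zero_mul] at e'
    exact mul_left_cancel₀ h2 (by linear_combination e' - e)
  · simp only [conicPoint] at ha hc hc0
    rw [hc] at ha hc0
    exact mul_right_cancel₀ hc0 (by linear_combination -ha)

end Conic

theorem IsLocalRing.isUnit_one_add_of_mem_maximalIdeal {R : Type*} [CommRing R] [IsLocalRing R]
    {x : R} (hx : x ∈ maximalIdeal R) : IsUnit (1 + x) := by
  simpa using isUnit_one_sub_self_of_mem_nonunits (-x) (neg_mem hx)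

namespace Matrix.SpecialLinearGroup

variable {R : Type*} [CommRing R] [IsLocalRing R]

noncomputable def ofConicPoint (X : SpecialLinearGroup (Fin 2) R) (s : maximalIdeal R) :
    SpecialLinearGroup (Fin 2) R :=
  ⟨(conicPoint (trace (X : Matrix (Fin 2) (Fin 2) R)) s).1 • 1
      + (conicPoint (trace (X : Matrix (Fin 2) (Fin 2) R)) s).2 • (X : Matrix (Fin 2) (Fin 2) R),
    by
      rw [det_fin_two_smul_one_add_smul, X.det_coe, mul_one]
      exact conicPoint_mem (isUnit_one_add_of_mem_maximalIdeal (Ideal.mul_mem_right _ _ s.2))⟩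

theorem commute_ofConicPoint (X : SpecialLinearGroup (Fin 2) R) (s : maximalIdeal R) :
    Commute (ofConicPoint X s) X :=
  Subtype.ext (commute_smul_one_add_smul_self _ _ _).eq

theorem ofConicPoint_injective [IsDomain R] (h2 : (2 : R) ≠ 0)
    {X : SpecialLinearGroup (Fin 2) R}
    (hX : X ∉ Subgroup.center (SpecialLinearGroup (Fin 2) R)) :
    Function.Injective (ofConicPoint X) := by
  have hA : ∃ B : Matrix (Fin 2) (Fin 2) R, ¬Commute B X := by
    obtain ⟨Y, hY⟩ := not_forall.mp (mt Subgroup.mem_center_iff.mpr hX)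
    exact ⟨Y, fun h ↦ hY (Subtype.ext h.eq)⟩
  intro s s' h
  refine Subtype.ext <| conicPoint_injOn h2 ?_ ?_ <|
    smul_one_add_smul_injective hA (congr_arg Subtype.val h)
  · exact isUnit_one_add_of_mem_maximalIdeal (Ideal.mul_mem_right _ _ s.2)
  · exact isUnit_one_add_of_mem_maximalIdeal (Ideal.mul_mem_right _ _ s'.2)

theorem infinite_setOf_commute [IsDomain R] (h2 : (2 : R) ≠ 0)
    (hm : (maximalIdeal R : Set R).Infinite) (X : SpecialLinearGroup (Fin 2) R) :
    {Y | Commute Y X}.Infinite := by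
  have := hm.to_subtype
  by_cases hX : X ∈ Subgroup.center (SpecialLinearGroup (Fin 2) R)
  · have : Infinite R :=
      Infinite.of_injective (Subtype.val : maximalIdeal R → R) Subtype.val_injective
    exact Set.infinite_of_injective_forall_mem
      (transvection_injective (zero_ne_one : (0 : Fin 2) ≠ 1))
      fun b ↦ Subgroup.mem_center_iff.mp hX _
  · exact Set.infinite_of_injective_forall_mem
      (ofConicPoint_injective h2 hX) (commute_ofConicPoint X)

end Matrix.SpecialLinearGroup

theorem PadicInt.infinite_maximalIdeal (p : ℕ) [Fact p.Prime] :
    (maximalIdeal ℤ_[p] : Set ℤ_[p]).Infinite := by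
  have hp : (p : ℤ_[p]) ∈ maximalIdeal ℤ_[p] :=
    maximalIdeal_eq_span_p (p := p) ▸ Ideal.mem_span_singleton_self _
  refine Set.infinite_of_injective_forall_mem (f := fun k : ℕ ↦ (p : ℤ_[p]) * k) ?_
    fun k ↦ Ideal.mul_mem_right _ _ hp
  intro k k' h
  exact Nat.cast_injective <|
    mul_left_cancel₀ (Nat.cast_ne_zero.mpr (Fact.out : p.Prime).ne_zero) h

/-- For every matrix `X` in `SL₂(ℤₚ)`, the centralizer of `X` in `SL₂(ℤₚ)`,
namely `{Y ∈ SL₂(ℤₚ) | Y * X * Y⁻¹ = X}`, is an infinite set. -/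
theorem centralizer_infinite_in_SL2_padic (p : ℕ) [Fact p.Prime]
    (X : Matrix.SpecialLinearGroup (Fin 2) ℤ_[p]) :
    {Y : Matrix.SpecialLinearGroup (Fin 2) ℤ_[p] | Y * X * Y⁻¹ = X}.Infinite := by
  have h := Matrix.SpecialLinearGroup.infinite_setOf_commute two_ne_zero
    (PadicInt.infinite_maximalIdeal p) X
  simpa only [Commute, SemiconjBy, ← mul_inv_eq_iff_eq_mul] using h
end

section
/- Let p be a prime with p ≥ 5. Then the group GL₂(ℤₚ) contains no element of order p. -/
/-!
View `g` in `GL₂(ℚ_[p])`. If `g ^ p = 1`, the minimal polynomial of `g` divides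
`X ^ p - 1 = Φ_p * (X - 1)`. By Eisenstein's criterion at `p` (applied to `Φ_p(X + 1)`) and
Gauss's lemma, `Φ_p` is irreducible over `ℚ_[p]`; its degree `p - 1` exceeds `2`, the degree
bound for minimal polynomials of `2 × 2` matrices, so it is coprime to the minimal polynomial of
`g`. Hence the minimal polynomial divides `X - 1`, i.e. `g = 1`.
-/

open Polynomial

section Cyclotomic

variable (p : ℕ) {R : Type*} [CommRing R]

theorem monic_cyclotomic_comp_X_add_one : ((cyclotomic p R).comp (X + 1)).Monic := by
  simpa only [C_1] using (cyclotomic.monic p R).comp_X_add_C 1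

variable [Fact p.Prime] [IsDomain R]

theorem cyclotomic_comp_X_add_one_isEisensteinAt_span_natCast (hp : Prime (p : R)) :
    ((cyclotomic p R).comp (X + 1)).IsEisensteinAt (Ideal.span {(p : R)}) := by
  have hmap : (cyclotomic p R).comp (X + 1) =
      ((cyclotomic p ℤ).comp (X + 1)).map (Int.castRingHom R) := by
    simp [map_comp, map_cyclotomic]
  refine (monic_cyclotomic_comp_X_add_one p).isEisensteinAt_of_mem_of_notMem
    (Ideal.span_singleton_ne_top hp.not_isUnit) (fun {n} hn => ?_) ?_
  · rw [hmap, (monic_cyclotomic_comp_X_add_one p).natDegree_map] at hn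
    obtain ⟨c, hc⟩ := Ideal.mem_span_singleton'.1 <|
      (cyclotomic_comp_X_add_one_isEisensteinAt p).mem hn
    rw [hmap, coeff_map, ← hc, Ideal.mem_span_singleton]
    simp
  · rw [coeff_zero_eq_eval_zero, eval_comp, eval_add, eval_X, eval_one, zero_add,
      eval_one_cyclotomic_prime, Ideal.span_singleton_pow, Ideal.mem_span_singleton, sq]
    exact fun h => hp.not_isUnit <| isUnit_of_dvd_one <|
      (mul_dvd_mul_iff_left hp.ne_zero).1 (by simpa using h)

theorem irreducible_cyclotomic_of_prime_natCast (hp : Prime (p : R)) :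
    Irreducible (cyclotomic p R) := by
  have hirr : Irreducible ((cyclotomic p R).comp (X + 1)) := by
    refine (cyclotomic_comp_X_add_one_isEisensteinAt_span_natCast p hp).irreducible
      ((Ideal.span_singleton_prime hp.ne_zero).2 hp)
      (monic_cyclotomic_comp_X_add_one p).isPrimitive ?_
    rw [natDegree_comp, natDegree_cyclotomic, Nat.totient_prime Fact.out, ← C_1,
      natDegree_X_add_C]
    exact Nat.mul_pos (Nat.sub_pos_of_lt (Fact.out : p.Prime).one_lt) one_pos
  rw [← MulEquiv.irreducible_iff (algEquivAevalXAddC (1 : R)).toMulEquiv]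
  simpa [algEquivAevalXAddC, ← comp_eq_aeval] using hirr

theorem irreducible_cyclotomic_fractionRing_of_prime_natCast [IsIntegrallyClosed R]
    (K : Type*) [Field K] [Algebra R K] [IsFractionRing R K] (hp : Prime (p : R)) :
    Irreducible (cyclotomic p K) := by
  simpa [map_cyclotomic] using
    (cyclotomic.monic p R).irreducible_iff_irreducible_map_fraction_map (K := K) |>.1
      (irreducible_cyclotomic_of_prime_natCast p hp)

end Cyclotomic

theorem Matrix.eq_one_of_pow_prime_eq_one {K : Type*} [Field K] {n : Type*} [Fintype n]
    [DecidableEq n] {p : ℕ} [Fact p.Prime] (hΦ : Irreducible (cyclotomic p K))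
    (hn : Fintype.card n < p - 1) {M : Matrix n n K} (hM : M ^ p = 1) : M = 1 := by
  have hdvd : minpoly K M ∣ cyclotomic p K * (X - 1) := by
    rw [cyclotomic_prime_mul_X_sub_one]
    exact minpoly.dvd K M (by simp [hM])
  have hdeg : (minpoly K M).natDegree < (cyclotomic p K).natDegree := by
    rw [natDegree_cyclotomic, Nat.totient_prime Fact.out]
    calc (minpoly K M).natDegree ≤ M.charpoly.natDegree :=
          natDegree_le_of_dvd (Matrix.minpoly_dvd_charpoly M) M.charpoly_monic.ne_zero
      _ < p - 1 := M.charpoly_natDegree_eq_dim ▸ hn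
  have hcop : IsCoprime (cyclotomic p K) (minpoly K M) :=
    hΦ.coprime_iff_not_dvd.2 fun h =>
      hdeg.not_ge (natDegree_le_of_dvd h (minpoly.ne_zero (IsIntegral.of_finite K M)))
  simpa [sub_eq_zero] using minpoly.dvd_iff.1 (hcop.symm.dvd_of_dvd_mul_left hdvd)

/-- Let `p ≥ 5` be a prime. Then `GL₂(ℤₚ)` contains no element of order `p`,
i.e. there is no `g ∈ GL₂(ℤₚ)` with `g ≠ 1` and `g^p = 1`. -/
theorem GL2_padic_no_element_of_order_p (p : ℕ) [Fact p.Prime] (hp : 5 ≤ p) :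
    ¬ ∃ g : GL (Fin 2) ℤ_[p], g ≠ 1 ∧ g ^ p = 1 := by
  rintro ⟨g, hg1, hgp⟩
  let toQp := (PadicInt.Coe.ringHom (p := p)).mapMatrix (m := Fin 2)
  have hΦ : Irreducible (cyclotomic p ℚ_[p]) :=
    irreducible_cyclotomic_fractionRing_of_prime_natCast p ℚ_[p] PadicInt.prime_p
  have hgp' : toQp g ^ p = 1 := by
    rw [← map_pow, ← Units.val_pow_eq_pow_val, hgp, Units.val_one, map_one]
  have hg1' : toQp g = toQp 1 := by
    rw [map_one]
    exact Matrix.eq_one_of_pow_prime_eq_one hΦ (by rw [Fintype.card_fin]; omega) hgp'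
  exact hg1 (Units.ext (Matrix.map_injective Subtype.coe_injective hg1'))
end
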